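/- arXiv:2509.15544 — 4 statements merged into one kernel-verified Lean document; each statement's English description precedes it below -/
import Mathlib

section
/- Let (Ω₁, d₁) and (Ω₂, d₂) be complete separable metric spaces. Let X, Y, and Yⁿ (n ∈ ℕ) be random variables defined on a common probability space (Ω, 𝓕, ℙ), with X taking values in Ω₁ and Y, Yⁿ taking values in Ω₂. Suppose that the laws of the pairs (X, Yⁿ) on Ω₁ × Ω₂ converge weakly as n → ∞ to the law of (X, Y), i.e., E[g(X, Yⁿ)] → E[g(X, Y)] for every bounded continuous function g : Ω₁ × Ω₂ → ℝ. Suppose further that Y is almost surely determined by X in the sense that there exists a Borel measurable function h : Ω₁ → Ω₂ with Y = h(X) almost surely. Then Yⁿ → Y in probability, i.e., for every ε > 0, ℙ[d₂(Yⁿ, Y) > ε] → 0 as n → ∞. -/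
/-!
By Lusin's theorem, `h` is continuous on a closed set `K` carrying all but `δ` of the law of `X`.
The set `F` of pairs `(x, y)` with `x ∈ K` and `ε ≤ d(y, h x)` is then closed and null for the
law of `(X, Y)`, so by the portmanteau theorem its mass under the law of `(X, Yⁿ)` tends to `0`.
Since all these pairs have the same first marginal, the rest of `{ε ≤ d(Yⁿ, h X)}` lies in
`{X ∉ K}`, of probability `< δ`.
-/

open Filter Topology MeasureTheory Set ENNReal TopologicalSpace

theorem TopologicalSpace.IsTopologicalBasis.continuousOn_of_preimage_inter
    {α β : Type*} [TopologicalSpace α] [TopologicalSpace β]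
    {B : Set (Set β)} (hB : IsTopologicalBasis B) {f : α → β} {s : Set α}
    (hf : ∀ U ∈ B, ∃ V, IsOpen V ∧ f ⁻¹' U ∩ s = V ∩ s) : ContinuousOn f s := by
  rw [continuousOn_iff_continuous_domRestrict, hB.continuous_iff]
  intro U hU
  obtain ⟨V, hV, hUV⟩ := hf U hU
  refine ⟨V, hV, ?_⟩
  ext x
  simpa [x.2] using (Set.ext_iff.1 hUV x).symm

theorem Measurable.exists_isClosed_measure_compl_lt_continuousOn
    {α β : Type*} [TopologicalSpace α] [MeasurableSpace α] [OpensMeasurableSpace α]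
    [TopologicalSpace β] [SecondCountableTopology β] [MeasurableSpace β] [OpensMeasurableSpace β]
    {μ : Measure α} [IsFiniteMeasure μ] [μ.WeaklyRegular] {f : α → β} (hf : Measurable f)
    {δ : ℝ≥0∞} (hδ : δ ≠ 0) :
    ∃ K, IsClosed K ∧ μ Kᶜ < δ ∧ ContinuousOn f K := by
  obtain ⟨η, hη_pos, hη_sum⟩ :=
    ENNReal.exists_pos_sum_of_countable' (ENNReal.half_pos hδ).ne' (countableBasis β)
  have hV : ∀ U : countableBasis β, ∃ V, f ⁻¹' U ⊆ V ∧ IsOpen V ∧ μ (V \ f ⁻¹' U) < η U := by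
    intro U
    obtain ⟨V, hUV, hV, -, hμV⟩ :=
      (hf (isOpen_of_mem_countableBasis U.2).measurableSet).exists_isOpen_sdiff_lt
        (measure_ne_top μ _) (hη_pos U).ne'
    exact ⟨V, hUV, hV, hμV⟩
  choose V hUV hVo hμV using hV
  -- on `E`, every `f ⁻¹' U` agrees with the open set `V U`
  set E := (⋃ U, V U \ f ⁻¹' U)ᶜ
  have hE : MeasurableSet E := (MeasurableSet.iUnion fun U ↦
    (hVo U).measurableSet.diff (hf (isOpen_of_mem_countableBasis U.2).measurableSet)).compl
  obtain ⟨K, hKE, hK, hμK⟩ :=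
    hE.exists_isClosed_sdiff_lt (measure_ne_top μ _) (ENNReal.half_pos hδ).ne'
  refine ⟨K, hK, ?_, ?_⟩
  · calc μ Kᶜ ≤ μ (E \ K) + μ Eᶜ := by
          refine (measure_mono fun x hx ↦ ?_).trans (measure_union_le _ _)
          by_cases hxE : x ∈ E
          exacts [Or.inl ⟨hxE, hx⟩, Or.inr hxE]
      _ ≤ μ (E \ K) + ∑' U, μ (V U \ f ⁻¹' U) := by
          rw [compl_compl]; gcongr; exact measure_iUnion_le _
      _ < δ / 2 + δ / 2 := by
          exact ENNReal.add_lt_add hμK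
            ((ENNReal.tsum_le_tsum fun U ↦ (hμV U).le).trans_lt hη_sum)
      _ = δ := ENNReal.add_halves δ
  · refine ((isBasis_countableBasis β).continuousOn_of_preimage_inter fun U hU ↦
      ⟨V ⟨U, hU⟩, hVo _, ?_⟩).mono hKE
    ext x
    refine ⟨fun hx ↦ ⟨hUV _ hx.1, hx.2⟩, fun hx ↦ ⟨?_, hx.2⟩⟩
    by_contra hfx
    exact hx.2 (mem_iUnion_of_mem ⟨U, hU⟩ ⟨hx.1, hfx⟩)

theorem isClosed_setOf_le_dist_graph {α β : Type*} [TopologicalSpace α] [PseudoMetricSpace β]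
    {h : α → β} {K : Set α} (hK : IsClosed K) (hh : ContinuousOn h K) (ε : ℝ) :
    IsClosed (K ×ˢ univ ∩ {p : α × β | ε ≤ dist p.2 (h p.1)}) :=
  (continuous_dist.comp_continuousOn (continuousOn_snd.prodMk
    (hh.comp continuousOn_fst fun _ hp ↦ hp.1))).preimage_isClosed_of_isClosed
      (hK.prod isClosed_univ) isClosed_Ici

namespace MeasureTheory

theorem ProbabilityMeasure.tendsto_measure_setOf_le_dist_graph
    {α β ι : Type*} [TopologicalSpace α] [PseudoMetrizableSpace α] [MeasurableSpace α]
    [BorelSpace α] [PseudoMetricSpace β] [SecondCountableTopology β] [MeasurableSpace β]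
    [OpensMeasurableSpace β]
    {L : Filter ι} {μs : ι → ProbabilityMeasure (α × β)} {μ : ProbabilityMeasure (α × β)}
    (hμs : Tendsto μs L (𝓝 μ))
    (hfst : ∀ i, (μs i : Measure (α × β)).map Prod.fst = (μ : Measure (α × β)).map Prod.fst)
    {h : α → β} (hh : Measurable h) (hμ : ∀ᵐ p ∂(μ : Measure (α × β)), p.2 = h p.1)
    {ε : ℝ} (hε : 0 < ε) :
    Tendsto (fun i ↦ (μs i : Measure (α × β)) {p | ε ≤ dist p.2 (h p.1)}) L (𝓝 0) := by
  rw [ENNReal.tendsto_nhds_zero]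
  intro δ hδ
  obtain ⟨K, hK, hμK, hhK⟩ := hh.exists_isClosed_measure_compl_lt_continuousOn
    (μ := (μ : Measure (α × β)).map Prod.fst) (ENNReal.half_pos hδ.ne').ne'
  set F := K ×ˢ univ ∩ {p : α × β | ε ≤ dist p.2 (h p.1)}
  have hF : IsClosed F := isClosed_setOf_le_dist_graph hK hhK ε
  have hμF : (μ : Measure (α × β)) F = 0 := by
    refine measure_mono_null (fun p hp ↦ show ¬_ from fun hp_eq ↦ ?_) (ae_iff.1 hμ)
    have : ε ≤ 0 := by simpa [hp_eq] using hp.2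
    linarith
  have hμsF : Tendsto (fun i ↦ (μs i : Measure (α × β)) F) L (𝓝 0) := by
    simpa [hμF] using ProbabilityMeasure.tendsto_measure_of_null_frontier_of_tendsto' hμs
      (measure_mono_null hF.frontier_subset hμF)
  filter_upwards [(tendsto_order.1 hμsF).2 _ (ENNReal.half_pos hδ.ne')] with i hi
  calc (μs i : Measure (α × β)) {p | ε ≤ dist p.2 (h p.1)}
      ≤ (μs i : Measure (α × β)) (Prod.fst ⁻¹' Kᶜ) + (μs i : Measure (α × β)) F := by
        refine (measure_mono fun p hp ↦ ?_).trans (measure_union_le _ _)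
        by_cases hpK : p.1 ∈ K
        exacts [Or.inr ⟨⟨hpK, trivial⟩, hp⟩, Or.inl hpK]
    _ = (μ : Measure (α × β)).map Prod.fst Kᶜ + (μs i : Measure (α × β)) F := by
        rw [← hfst i, Measure.map_apply measurable_fst hK.measurableSet.compl]
    _ ≤ δ / 2 + δ / 2 := add_le_add hμK.le hi.le
    _ = δ := ENNReal.add_halves δ

theorem tendstoInDistribution_of_forall_tendsto_integral {Ω E ι : Type*} [MeasurableSpace Ω]
    {μ : Measure Ω} [IsProbabilityMeasure μ] [TopologicalSpace E] [MeasurableSpace E]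
    [OpensMeasurableSpace E] {L : Filter ι} {X : ι → Ω → E} {Z : Ω → E}
    (hX : ∀ i, AEMeasurable (X i) μ) (hZ : AEMeasurable Z μ)
    (h : ∀ g : BoundedContinuousFunction E ℝ,
      Tendsto (fun i ↦ ∫ ω, g (X i ω) ∂μ) L (𝓝 (∫ ω, g (Z ω) ∂μ))) :
    TendstoInDistribution X L Z (fun _ ↦ μ) μ where
  forall_aemeasurable := hX
  aemeasurable_limit := hZ
  tendsto := by
    refine ProbabilityMeasure.tendsto_iff_forall_integral_tendsto.2 fun g ↦ ?_
    simp only [ProbabilityMeasure.coe_mk]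
    rw [integral_map hZ g.continuous.aestronglyMeasurable]
    simpa only [integral_map (hX _) g.continuous.aestronglyMeasurable] using h g

theorem TendstoInDistribution.tendstoInMeasure_of_prodMk_of_ae_eq_comp
    {Ω α β ι : Type*} [MeasurableSpace Ω] {P : Measure Ω} [IsProbabilityMeasure P]
    [TopologicalSpace α] [PseudoMetrizableSpace α] [MeasurableSpace α] [BorelSpace α]
    [MetricSpace β] [SecondCountableTopology β] [MeasurableSpace β] [BorelSpace β]
    {L : Filter ι} {X : Ω → α} {Yn : ι → Ω → β} {Y : Ω → β}
    (hXY : TendstoInDistribution (fun i ω ↦ (X ω, Yn i ω)) L (fun ω ↦ (X ω, Y ω)) (fun _ ↦ P) P)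
    {h : α → β} (hh : Measurable h) (hY : Y =ᵐ[P] h ∘ X) :
    TendstoInMeasure P Yn L Y := by
  refine TendstoInMeasure.congr_right hY.symm (tendstoInMeasure_iff_dist.2 fun ε hε ↦ ?_)
  have hfst : ∀ {Z : Ω → β}, AEMeasurable (fun ω ↦ (X ω, Z ω)) P →
      (P.map fun ω ↦ (X ω, Z ω)).map Prod.fst = P.map X := fun hXZ ↦
    AEMeasurable.map_map_of_aemeasurable measurable_fst.aemeasurable hXZ
  have hgraph : ∀ᵐ p ∂P.map (fun ω ↦ (X ω, Y ω)), p.2 = h p.1 :=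
    (ae_map_iff hXY.aemeasurable_limit
      (measurableSet_eq_fun measurable_snd (hh.comp measurable_fst))).2 hY
  refine tendsto_of_tendsto_of_tendsto_of_le_of_le tendsto_const_nhds
    (ProbabilityMeasure.tendsto_measure_setOf_le_dist_graph hXY.tendsto
      (fun i ↦ (hfst (hXY.forall_aemeasurable i)).trans (hfst hXY.aemeasurable_limit).symm)
      hh hgraph hε) (fun _ ↦ zero_le) fun i ↦ ?_
  exact Measure.le_map_apply (hXY.forall_aemeasurable i) _

end MeasureTheory

theorem tendsto_in_probability_of_joint_weak_convergence_general
    {Ω : Type*} [MeasureSpace Ω] [IsProbabilityMeasure (volume : Measure Ω)]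
    {Ω₁ : Type*} [MetricSpace Ω₁] [MeasurableSpace Ω₁] [BorelSpace Ω₁]
    {Ω₂ : Type*} [MetricSpace Ω₂] [TopologicalSpace.SeparableSpace Ω₂]
    [MeasurableSpace Ω₂] [BorelSpace Ω₂]
    (X : Ω → Ω₁) (Y : Ω → Ω₂) (Yn : ℕ → Ω → Ω₂)
    (hX : Measurable X) (hY : Measurable Y) (hYn : ∀ n, Measurable (Yn n))
    (hweak : ∀ g : BoundedContinuousFunction (Ω₁ × Ω₂) ℝ,
      Tendsto (fun n => ∫ ω, g (X ω, Yn n ω) ∂(volume : Measure Ω)) atTop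
        (𝓝 (∫ ω, g (X ω, Y ω) ∂(volume : Measure Ω))))
    (hdet : ∃ h : Ω₁ → Ω₂, Measurable h ∧ ∀ᵐ ω ∂(volume : Measure Ω), Y ω = h (X ω)) :
    ∀ ε > (0 : ℝ),
      Tendsto (fun n => (volume : Measure Ω) {ω | ε < dist (Yn n ω) (Y ω)}) atTop (𝓝 0) := by
  obtain ⟨h, hh, hYh⟩ := hdet
  have hconv := tendstoInDistribution_of_forall_tendsto_integral
    (fun n ↦ (hX.prodMk (hYn n)).aemeasurable) (hX.prodMk hY).aemeasurable hweak
  have hprob :=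
    tendstoInMeasure_iff_dist.1 (hconv.tendstoInMeasure_of_prodMk_of_ae_eq_comp hh hYh)
  intro ε hε
  exact tendsto_of_tendsto_of_tendsto_of_le_of_le tendsto_const_nhds (hprob ε hε)
    (fun _ ↦ zero_le) fun _ ↦ measure_mono (ofPred_subset_ofPred.2 fun _ ↦ le_of_lt)

/-- Let `Ω₁, Ω₂` be complete separable metric spaces, and let `X, Yₙ, Y`
be random variables on a common probability space, with `X` valued in `Ω₁` and `Y, Yₙ`
valued in `Ω₂`. If the laws of `(X, Yₙ)` converge weakly to the law of `(X, Y)` and `Y`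
is a.s. determined by `X` (via a Borel measurable function), then `Yₙ → Y` in probability. -/
theorem tendsto_in_probability_of_joint_weak_convergence
    {Ω : Type*} [MeasureSpace Ω] [IsProbabilityMeasure (volume : Measure Ω)]
    {Ω₁ : Type*} [MetricSpace Ω₁] [CompleteSpace Ω₁] [TopologicalSpace.SeparableSpace Ω₁]
    [MeasurableSpace Ω₁] [BorelSpace Ω₁]
    {Ω₂ : Type*} [MetricSpace Ω₂] [CompleteSpace Ω₂] [TopologicalSpace.SeparableSpace Ω₂]
    [MeasurableSpace Ω₂] [BorelSpace Ω₂]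
    (X : Ω → Ω₁) (Y : Ω → Ω₂) (Yn : ℕ → Ω → Ω₂)
    (hX : Measurable X) (hY : Measurable Y) (hYn : ∀ n, Measurable (Yn n))
    (hweak : ∀ g : BoundedContinuousFunction (Ω₁ × Ω₂) ℝ,
      Tendsto (fun n => ∫ ω, g (X ω, Yn n ω) ∂(volume : Measure Ω)) atTop
        (𝓝 (∫ ω, g (X ω, Y ω) ∂(volume : Measure Ω))))
    (hdet : ∃ h : Ω₁ → Ω₂, Measurable h ∧ ∀ᵐ ω ∂(volume : Measure Ω), Y ω = h (X ω)) :
    ∀ ε > (0 : ℝ),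
      Tendsto (fun n => (volume : Measure Ω) {ω | ε < dist (Yn n ω) (Y ω)}) atTop (𝓝 0) :=
  tendsto_in_probability_of_joint_weak_convergence_general X Y Yn hX hY hYn hweak hdet
end

section
/- Let B = (B_t)_{t ≥ 0} be a standard one-dimensional Brownian motion started from 0, defined on a probability space (Ω, 𝓕, ℙ). Fix p ∈ (0,1). Then there exist ε, δ ∈ (0,1) and K₀ ∈ ℕ, depending only on p, such that for every natural number K ≥ K₀ the following holds: with probability at least p, the number of indices j ∈ {1, …, K−1} such that B_t > δ for all t ∈ [j/K, (j+1)/K] is at least εK. -/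
open Filter Topology MeasureTheory ProbabilityTheory
open scoped NNReal ENNReal

/-- A standard one-dimensional Brownian motion started from `0`: it vanishes at time `0`
almost surely, has almost surely continuous sample paths, and for `0 ≤ s ≤ t` the increment
`B t - B s` is a centered Gaussian with variance `t - s`, independent of `(B u)_{u ≤ s}`. -/
def IsStandardBrownianMotion {Ω : Type*} [MeasureSpace Ω] (B : ℝ≥0 → Ω → ℝ) : Prop :=
  (∀ᵐ ω ∂(volume : Measure Ω), B 0 ω = 0) ∧
  (∀ᵐ ω ∂(volume : Measure Ω), Continuous fun t : ℝ≥0 => B t ω) ∧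
  (∀ s t : ℝ≥0, s ≤ t →
    Measure.map (fun ω => B t ω - B s ω) (volume : Measure Ω) = gaussianReal 0 (t - s)) ∧
  (∀ s t : ℝ≥0, s ≤ t →
    Indep (MeasurableSpace.comap (fun ω => B t ω - B s ω) inferInstance)
      (⨆ u ∈ Set.Iic s, MeasurableSpace.comap (B u) inferInstance) (volume : Measure Ω))

/-!
Brownian motion does not stay nonpositive on `[0, 1]`. Along the geometric times
`t₀ (1 + c²)ᵏ`, given the past, staying nonpositive one more step forces the next increment
below `√(t - s)` unless `B s` already lies below `-√(t - s)`; by independence of increments and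
Gaussian scaling this gives `P(stay ≤ 0) ≤ Φ(1)ⁿ + n Φ(-c)`, which tends to `0` as `c → ∞`, then
`n → ∞`. So almost every path is continuous and positive somewhere in `[0, 1]`, hence exceeds some
level `L > 0` on a window `[a, a + L] ⊆ [0, 1]`. By continuity from below a single `L` works with
probability `> p`, and such a window contains at least `L K / 2` of the intervals
`[j / K, (j + 1) / K]` once `L K ≥ 4`: take `δ = L` and `ε = L / 2`.
-/

open Set

lemma gaussianReal_Iic_mul_sqrt {v : ℝ≥0} (hv : v ≠ 0) (x : ℝ) :
    gaussianReal 0 v (Iic (x * √v)) = gaussianReal 0 1 (Iic x) := by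
  have hsqrt : 0 < √(v : ℝ) := Real.sqrt_pos.2 (by positivity)
  have hmap : (gaussianReal 0 v).map (· / √(v : ℝ)) = gaussianReal 0 1 := by
    rw [gaussianReal_map_div_const, zero_div]
    congr
    ext
    simp [Real.sq_sqrt (NNReal.coe_nonneg v), hv]
  rw [← hmap, Measure.map_apply (by fun_prop) measurableSet_Iic]
  congr 1
  ext y
  simp [div_le_iff₀ hsqrt]

lemma gaussianReal_Iic_lt_one (m : ℝ) {v : ℝ≥0} (hv : v ≠ 0) (x : ℝ) :
    gaussianReal m v (Iic x) < 1 := by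
  have hIoi : 0 < gaussianReal m v (Ioi x) :=
    (gaussianReal_absolutelyContinuous' m hv).pos_mono (by simp)
  rw [← compl_Ioi, prob_compl_eq_one_sub measurableSet_Ioi]
  exact ENNReal.sub_lt_self ENNReal.one_ne_top one_ne_zero hIoi.ne'

lemma tendsto_gaussianReal_Iic_atBot (m : ℝ) (v : ℝ≥0) :
    Tendsto (fun x => gaussianReal m v (Iic x)) atBot (𝓝 0) := by
  simpa [ofReal_cdf] using ENNReal.tendsto_ofReal (tendsto_cdf_atBot (μ := gaussianReal m v))

lemma measurableSet_iSup_comap_preimage {Ω : Type*} {B : ℝ≥0 → Ω → ℝ} {s u : ℝ≥0}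
    (hu : u ≤ s) {A : Set ℝ} (hA : MeasurableSet A) :
    MeasurableSet[⨆ u ∈ Iic s, MeasurableSpace.comap (B u) inferInstance] (B u ⁻¹' A) :=
  le_iSup₂ (f := fun u (_ : u ∈ Iic s) => MeasurableSpace.comap (B u) inferInstance) u hu _
    ⟨A, hA, rfl⟩

section BrownianIncrements

variable {Ω : Type*} [MeasurableSpace Ω] {μ : Measure Ω} {B : ℝ≥0 → Ω → ℝ}

lemma hasLaw_of_map_eq {𝓧 : Type*} [MeasurableSpace 𝓧] {X : Ω → 𝓧} {ν : Measure 𝓧} [NeZero ν]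
    (h : μ.map X = ν) : HasLaw X ν μ :=
  ⟨aemeasurable_of_map_neZero (h ▸ inferInstance), h⟩

lemma hasLaw_gaussianReal_of_increments (h0 : ∀ᵐ ω ∂μ, B 0 ω = 0)
    (hmap : ∀ s t : ℝ≥0, s ≤ t → μ.map (fun ω => B t ω - B s ω) = gaussianReal 0 (t - s))
    (t : ℝ≥0) : HasLaw (B t) (gaussianReal 0 t) μ := by
  refine (hasLaw_congr ?_).1 (hasLaw_of_map_eq (tsub_zero t ▸ hmap 0 t zero_le))
  filter_upwards [h0] with ω hω
  simp [hω]

lemma measure_inter_nonpos_le {s t : ℝ≥0}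
    (hincr : HasLaw (fun ω => B t ω - B s ω) (gaussianReal 0 (t - s)) μ)
    (hlaw : HasLaw (B s) (gaussianReal 0 s) μ)
    (hindep : Indep (MeasurableSpace.comap (fun ω => B t ω - B s ω) inferInstance)
      (⨆ u ∈ Iic s, MeasurableSpace.comap (B u) inferInstance) μ)
    {E : Set Ω} (hE : MeasurableSet[⨆ u ∈ Iic s, MeasurableSpace.comap (B u) inferInstance] E)
    (a : ℝ) :
    μ (E ∩ {ω | B t ω ≤ 0}) ≤
      gaussianReal 0 (t - s) (Iic a) * μ E + gaussianReal 0 s (Iic (-a)) := by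
  have hsub : E ∩ {ω | B t ω ≤ 0} ⊆
      ({ω | B t ω - B s ω ≤ a} ∩ E) ∪ {ω | B s ω ≤ -a} := by
    rintro ω ⟨hωE, hωt : B t ω ≤ 0⟩
    by_cases hωs : B s ω ≤ -a
    · exact Or.inr hωs
    · exact Or.inl ⟨(by linarith [not_le.1 hωs] : B t ω - B s ω ≤ a), hωE⟩
  have hprod : μ ({ω | B t ω - B s ω ≤ a} ∩ E) = μ {ω | B t ω - B s ω ≤ a} * μ E :=
    (Indep_iff _ _ μ).1 hindep _ _ ⟨Iic a, measurableSet_Iic, rfl⟩ hE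
  calc μ (E ∩ {ω | B t ω ≤ 0})
      ≤ μ ({ω | B t ω - B s ω ≤ a} ∩ E) + μ {ω | B s ω ≤ -a} :=
        (measure_mono hsub).trans (measure_union_le _ _)
    _ = gaussianReal 0 (t - s) (Iic a) * μ E + gaussianReal 0 s (Iic (-a)) := by
        rw [hprod, hincr.measure_eq measurableSet_Iic, hlaw.measure_eq measurableSet_Iic]
        rfl

variable [IsProbabilityMeasure μ]

lemma measure_forall_geometric_nonpos_le
    (hlaw : ∀ t, HasLaw (B t) (gaussianReal 0 t) μ)
    (hincr : ∀ s t, s ≤ t → HasLaw (fun ω => B t ω - B s ω) (gaussianReal 0 (t - s)) μ)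
    (hindep : ∀ s t : ℝ≥0, s ≤ t →
      Indep (MeasurableSpace.comap (fun ω => B t ω - B s ω) inferInstance)
        (⨆ u ∈ Iic s, MeasurableSpace.comap (B u) inferInstance) μ)
    {t₀ c : ℝ≥0} (ht₀ : t₀ ≠ 0) (hc : c ≠ 0) (n : ℕ) :
    μ {ω | ∀ k ≤ n, B (t₀ * (1 + c ^ 2) ^ k) ω ≤ 0} ≤
      gaussianReal 0 1 (Iic 1) ^ n + n * gaussianReal 0 1 (Iic (-c)) := by
  induction n with
  | zero => simpa using prob_le_one
  | succ n ih =>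
    set s := t₀ * (1 + c ^ 2) ^ n
    set t := t₀ * (1 + c ^ 2) ^ (n + 1)
    have hst : s ≤ t := mul_le_mul_right (pow_le_pow_right₀ le_self_add n.le_succ) t₀
    have hts : ((t - s : ℝ≥0) : ℝ) = c ^ 2 * s := by
      rw [NNReal.coe_sub hst]; push_cast [s, t]; ring
    have hs : s ≠ 0 := mul_ne_zero ht₀ (pow_ne_zero _ (by positivity))
    have hts0 : t - s ≠ 0 := by
      rw [← NNReal.coe_ne_zero, hts]; positivity
    have hsqrt : √((t - s : ℝ≥0) : ℝ) = c * √(s : ℝ) := by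
      rw [hts, Real.sqrt_mul (by positivity), Real.sqrt_sq c.coe_nonneg]
    have hsplit : {ω | ∀ k ≤ n + 1, B (t₀ * (1 + c ^ 2) ^ k) ω ≤ 0} =
        {ω | ∀ k ≤ n, B (t₀ * (1 + c ^ 2) ^ k) ω ≤ 0} ∩ {ω | B t ω ≤ 0} := by
      ext ω; simp [Nat.le_succ_iff, or_imp, forall_and, t]
    have hpast : MeasurableSet[⨆ u ∈ Iic s, MeasurableSpace.comap (B u) inferInstance]
        {ω | ∀ k ≤ n, B (t₀ * (1 + c ^ 2) ^ k) ω ≤ 0} := by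
      simp only [ofPred_forall]
      exact .iInter fun k => .iInter fun hk => measurableSet_iSup_comap_preimage
        (mul_le_mul_right (pow_le_pow_right₀ le_self_add hk) t₀) measurableSet_Iic
    calc μ {ω | ∀ k ≤ n + 1, B (t₀ * (1 + c ^ 2) ^ k) ω ≤ 0}
        ≤ gaussianReal 0 (t - s) (Iic √((t - s : ℝ≥0) : ℝ)) *
              μ {ω | ∀ k ≤ n, B (t₀ * (1 + c ^ 2) ^ k) ω ≤ 0} +
            gaussianReal 0 s (Iic (-√((t - s : ℝ≥0) : ℝ))) := by
          rw [hsplit]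
          exact measure_inter_nonpos_le (hincr s t hst) (hlaw s) (hindep s t hst) hpast _
      _ = gaussianReal 0 1 (Iic 1) * μ {ω | ∀ k ≤ n, B (t₀ * (1 + c ^ 2) ^ k) ω ≤ 0} +
            gaussianReal 0 1 (Iic (-c)) := by
          rw [← gaussianReal_Iic_mul_sqrt hts0 1, one_mul, hsqrt, neg_mul_eq_neg_mul,
            gaussianReal_Iic_mul_sqrt hs]
      _ ≤ gaussianReal 0 1 (Iic 1) * (gaussianReal 0 1 (Iic 1) ^ n +
            n * gaussianReal 0 1 (Iic (-c))) + gaussianReal 0 1 (Iic (-c)) := by gcongr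
      _ = gaussianReal 0 1 (Iic 1) ^ (n + 1) +
            (gaussianReal 0 1 (Iic 1) * (n * gaussianReal 0 1 (Iic (-c))) +
              gaussianReal 0 1 (Iic (-c))) := by ring
      _ ≤ gaussianReal 0 1 (Iic 1) ^ (n + 1) +
            (n * gaussianReal 0 1 (Iic (-c)) + gaussianReal 0 1 (Iic (-c))) := by
          gcongr _ + (?_ + _)
          exact mul_le_of_le_one_left' prob_le_one
      _ = gaussianReal 0 1 (Iic 1) ^ (n + 1) + (n + 1 : ℕ) * gaussianReal 0 1 (Iic (-c)) := by
          push_cast; ring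

lemma measure_forall_nonpos_eq_zero
    (hlaw : ∀ t, HasLaw (B t) (gaussianReal 0 t) μ)
    (hincr : ∀ s t, s ≤ t → HasLaw (fun ω => B t ω - B s ω) (gaussianReal 0 (t - s)) μ)
    (hindep : ∀ s t : ℝ≥0, s ≤ t →
      Indep (MeasurableSpace.comap (fun ω => B t ω - B s ω) inferInstance)
        (⨆ u ∈ Iic s, MeasurableSpace.comap (B u) inferInstance) μ) :
    μ {ω | ∀ t ≤ 1, B t ω ≤ 0} = 0 := by
  set q := gaussianReal 0 1 (Iic 1)
  have hbound : ∀ n : ℕ, μ {ω | ∀ t ≤ 1, B t ω ≤ 0} ≤ q ^ n := by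
    intro n
    have hc : ∀ c : ℝ≥0, c ≠ 0 →
        μ {ω | ∀ t ≤ 1, B t ω ≤ 0} ≤ q ^ n + n * gaussianReal 0 1 (Iic (-c)) := by
      intro c hc
      have hpos : 0 < (1 + c ^ 2) ^ n := by positivity
      have hsub : {ω | ∀ t ≤ 1, B t ω ≤ 0} ⊆
          {ω | ∀ k ≤ n, B (((1 + c ^ 2) ^ n)⁻¹ * (1 + c ^ 2) ^ k) ω ≤ 0} :=
        fun ω hω k hk => hω _ <| (inv_mul_le_one₀ hpos).2 (pow_le_pow_right₀ le_self_add hk)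
      exact (measure_mono hsub).trans
        (measure_forall_geometric_nonpos_le hlaw hincr hindep (inv_ne_zero hpos.ne') hc n)
    have hlim : Tendsto (fun c : ℝ≥0 => q ^ n + n * gaussianReal 0 1 (Iic (-c))) atTop
        (𝓝 (q ^ n)) := by
      simpa using tendsto_const_nhds.add (ENNReal.Tendsto.const_mul
        ((tendsto_gaussianReal_Iic_atBot 0 1).comp
          (tendsto_neg_atTop_atBot.comp (NNReal.tendsto_coe_atTop.2 tendsto_id)))
        (Or.inr (ENNReal.natCast_ne_top n)))
    exact ge_of_tendsto hlim ((eventually_ne_atTop 0).mono hc)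
  exact le_zero_iff.1 (ge_of_tendsto' (ENNReal.tendsto_pow_atTop_nhds_zero_of_lt_one
    (gaussianReal_Iic_lt_one 0 one_ne_zero 1)) hbound)

end BrownianIncrements

def ExceedsOnWindow (f : ℝ≥0 → ℝ) (L : ℝ) : Prop :=
  ∃ a : ℝ, 0 ≤ a ∧ a + L ≤ 1 ∧ ∀ t : ℝ≥0, a ≤ t → (t : ℝ) ≤ a + L → L < f t

lemma antitone_exceedsOnWindow (f : ℝ≥0 → ℝ) : Antitone (ExceedsOnWindow f) :=
  fun _ _ hLL ⟨a, ha, haL, h⟩ =>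
    ⟨a, ha, by linarith, fun t h₁ h₂ => hLL.trans_lt (h t h₁ (by linarith))⟩

lemma Continuous.exists_exceedsOnWindow {f : ℝ≥0 → ℝ} (hf : Continuous f) {t : ℝ≥0}
    (ht : t ≤ 1) (hft : 0 < f t) : ∃ L > 0, ExceedsOnWindow f L := by
  obtain ⟨ρ, hρ, hball⟩ := Metric.continuous_iff.1 hf t (f t / 2) (by positivity)
  set L := min (min (ρ / 2) (f t / 2)) 1
  have hL : 0 < L := by positivity
  have hLρ : L < ρ := (min_le_left _ _).trans_lt ((min_le_left _ _).trans_lt (by linarith))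
  have hLf : L ≤ f t / 2 := (min_le_left _ _).trans (min_le_right _ _)
  have ht' : (t : ℝ) ≤ 1 := by exact_mod_cast ht
  refine ⟨L, hL, min t (1 - L), le_min t.2 (by linarith [min_le_right (min (ρ / 2) (f t / 2)) 1]),
    by linarith [min_le_right (t : ℝ) (1 - L)], fun s hs₁ hs₂ => ?_⟩
  have hts : (t : ℝ) ≤ min (t : ℝ) (1 - L) + L := by
    rw [← min_add_add_right, sub_add_cancel]
    exact le_min (by linarith) ht'
  have hdist : dist s t < ρ := by
    rw [NNReal.dist_eq, abs_sub_lt_iff]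
    constructor <;> linarith [min_le_left (t : ℝ) (1 - L)]
  have := hball s hdist
  rw [Real.dist_eq, abs_sub_lt_iff] at this
  linarith

lemma le_ncard_subintervals {a L : ℝ} {K : ℕ} (ha : 0 ≤ a) (haL : a + L ≤ 1)
    (hLK : 4 ≤ L * K) :
    L / 2 * K ≤ {j : ℕ | 1 ≤ j ∧ j < K ∧ a ≤ j / K ∧ (j + 1) / K ≤ a + L}.ncard := by
  set S := {j : ℕ | 1 ≤ j ∧ j < K ∧ a ≤ j / K ∧ (j + 1) / K ≤ a + L}
  have hK : (0 : ℝ) < K := by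
    rcases (Nat.cast_nonneg K : (0 : ℝ) ≤ K).lt_or_eq with h | h
    · exact h
    · rw [← h, mul_zero] at hLK; norm_num at hLK
  set lo := max ⌈a * K⌉₊ 1
  set hi := ⌊(a + L) * K⌋₊
  have hlo : (lo : ℝ) ≤ a * K + 1 := by
    simp only [lo, Nat.cast_max, Nat.cast_one, max_le_iff]
    exact ⟨(Nat.ceil_lt_add_one (by positivity)).le, by nlinarith⟩
  have hhi : (a + L) * K - 1 < hi := Nat.sub_one_lt_floor _
  have hlohi : lo ≤ hi := by
    have : (lo : ℝ) ≤ hi := by nlinarith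
    exact_mod_cast this
  have hsub : (Finset.Ico lo hi : Set ℕ) ⊆ S := by
    intro j hj
    simp only [Finset.coe_Ico, mem_Ico, lo, max_le_iff] at hj
    obtain ⟨⟨hceil, hj1⟩, hjhi⟩ := hj
    have hj' : ((j + 1 : ℕ) : ℝ) ≤ (a + L) * K :=
      (Nat.le_floor_iff (by nlinarith)).1 hjhi
    push_cast at hj'
    refine ⟨hj1, ?_, ?_, ?_⟩
    · have : (j : ℝ) + 1 ≤ K := by nlinarith
      exact_mod_cast this
    · rw [le_div_iff₀ hK]; exact Nat.ceil_le.1 hceil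
    · rwa [div_le_iff₀ hK]
  have hcard := Set.ncard_le_ncard hsub ((Set.finite_Iio K).subset fun j hj => hj.2.1)
  rw [Set.ncard_coe_finset, Nat.card_Ico] at hcard
  have hcard' : (hi : ℝ) - lo ≤ S.ncard := by
    rw [← Nat.cast_sub hlohi]; exact_mod_cast hcard
  nlinarith

lemma ExceedsOnWindow.le_ncard {f : ℝ≥0 → ℝ} {L : ℝ} (hf : ExceedsOnWindow f L) {K : ℕ}
    (hLK : 4 ≤ L * K) :
    L / 2 * K ≤ {j : ℕ | 1 ≤ j ∧ j < K ∧
      ∀ t : ℝ≥0, (j : ℝ≥0) / K ≤ t → t ≤ ((j : ℝ≥0) + 1) / K → L < f t}.ncard := by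
  obtain ⟨a, ha, haL, h⟩ := hf
  refine (le_ncard_subintervals ha haL hLK).trans ?_
  refine Nat.cast_le.2 (Set.ncard_le_ncard ?_ ((Set.finite_Iio K).subset fun j hj => hj.2.1))
  rintro j ⟨hj1, hjK, hja, hjL⟩
  refine ⟨hj1, hjK, fun t ht₁ ht₂ => h t (hja.trans ?_) (le_trans ?_ hjL)⟩
  · exact_mod_cast NNReal.coe_le_coe.2 ht₁
  · exact_mod_cast NNReal.coe_le_coe.2 ht₂

lemma eventually_lt_measure_of_ae_exists_pos {Ω : Type*} [MeasurableSpace Ω] {μ : Measure Ω}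
    [IsProbabilityMeasure μ] {P : Ω → ℝ → Prop} (hP : ∀ ω, Antitone (P ω))
    (hae : ∀ᵐ ω ∂μ, ∃ L > 0, P ω L) {r : ℝ≥0∞} (hr : r < 1) :
    ∀ᶠ L in 𝓝[>] 0, r < μ {ω | P ω L} := by
  have hmono : Monotone fun n : ℕ => {ω | P ω (1 / (n + 1))} := fun m n hmn ω hω =>
    hP ω (one_div_le_one_div_of_le (by positivity) (by gcongr)) hω
  have hunion : μ (⋃ n : ℕ, {ω | P ω (1 / (n + 1))}) = 1 := by
    rw [← measure_univ (μ := μ)]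
    have hnull : μ {ω | ¬∃ L > 0, P ω L} = 0 := ae_iff.1 hae
    refine measure_congr (ae_eq_univ.2 (measure_mono_null ?_ hnull))
    rintro ω hω ⟨L, hL, hPL⟩
    refine hω ?_
    obtain ⟨n, hn⟩ := exists_nat_one_div_lt hL
    exact mem_iUnion.2 ⟨n, hP ω hn.le hPL⟩
  rw [hmono.measure_iUnion] at hunion
  obtain ⟨n, hn⟩ := lt_iSup_iff.1 (hunion ▸ hr)
  filter_upwards [Ioc_mem_nhdsGT (show (0 : ℝ) < 1 / (n + 1) by positivity)] with L hL
  exact hn.trans_le (measure_mono fun ω => hP ω hL.2)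

/-- For a standard Brownian motion `B` and `p ∈ (0,1)`, there are
`ε, δ ∈ (0,1)` and `K₀ ∈ ℕ`, depending only on `p`, such that for every `K ≥ K₀`, with
probability at least `p`, the number of indices `j ∈ {1, …, K−1}` with `B t > δ` for all
`t ∈ [j/K, (j+1)/K]` is at least `ε K`. -/
theorem brownian_many_good_intervals
    {Ω : Type*} [MeasureSpace Ω] [IsProbabilityMeasure (volume : Measure Ω)]
    (B : ℝ≥0 → Ω → ℝ) (hB : IsStandardBrownianMotion B)
    (p : ℝ) (hp : p ∈ Set.Ioo (0 : ℝ) 1) :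
    ∃ ε ∈ Set.Ioo (0 : ℝ) 1, ∃ δ ∈ Set.Ioo (0 : ℝ) 1, ∃ K₀ : ℕ,
      ∀ K : ℕ, K₀ ≤ K →
        ENNReal.ofReal p ≤
          (volume : Measure Ω) {ω | ε * K ≤
            (Set.ncard {j : ℕ | 1 ≤ j ∧ j < K ∧
              ∀ t : ℝ≥0, (j : ℝ≥0) / K ≤ t → t ≤ ((j : ℝ≥0) + 1) / K → δ < B t ω} : ℝ)} := by
  obtain ⟨h0, hcont, hmap, hindep⟩ := hB
  have hnonpos : volume {ω | ∀ t ≤ 1, B t ω ≤ 0} = 0 :=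
    measure_forall_nonpos_eq_zero (hasLaw_gaussianReal_of_increments h0 hmap)
      (fun s t hst => hasLaw_of_map_eq (hmap s t hst)) hindep
  have hwindow : ∀ᵐ ω, ∃ L > 0, ExceedsOnWindow (fun t => B t ω) L := by
    filter_upwards [hcont, measure_eq_zero_iff_ae_notMem.1 hnonpos] with ω hω hpos
    obtain ⟨t, ht, hBt⟩ : ∃ t ≤ 1, 0 < B t ω := by simpa using hpos
    exact hω.exists_exceedsOnWindow ht hBt
  obtain ⟨L, hLp, hL0, hL1⟩ := ((eventually_lt_measure_of_ae_exists_pos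
    (fun ω => antitone_exceedsOnWindow _) hwindow (ENNReal.ofReal_lt_one.2 hp.2)).and
      (Ioo_mem_nhdsGT one_pos)).exists
  refine ⟨L / 2, ⟨by positivity, by linarith⟩, L, ⟨hL0, hL1⟩, ⌈4 / L⌉₊, fun K hK =>
    hLp.le.trans (measure_mono fun ω hω => (hω : ExceedsOnWindow _ L).le_ncard ?_)⟩
  rw [← div_le_iff₀' hL0]
  exact Nat.ceil_le.1 hK
end

section
/- For each n ∈ ℕ let d_n : ℂ × ℂ → ℝ be a metric on ℂ which is continuous as a function on ℂ × ℂ with the Euclidean topology, and let d : ℂ × ℂ → ℝ be a function such that d_n → d uniformly on compact subsets of ℂ × ℂ. Assume: (a) each d_n admits midpoints, i.e., for all z, w ∈ ℂ there exists x ∈ ℂ with d_n(z, x) = d_n(z, w)/2 = d_n(x, w); and (b) for every r > 0 and T > 0 there exists R > 0 such that for all n ∈ ℕ, d_n(z, w) > T whenever |z| ≤ r and |w| ≥ R. Then d admits midpoints: for all z, w ∈ ℂ there exists x ∈ ℂ with d(z, x) = d(z, w)/2 = d(x, w). -/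
open Filter Topology

/-!
The midpoints `xₙ` of `z` and `w` for `dₙ` satisfy `dₙ(z, xₙ) = dₙ(z, w)/2`, which is bounded since
`dₙ(z, w) → d(z, w)`; uniform properness therefore confines them to a compact ball, and a
subsequence converges to some `a`. A locally uniform limit of continuous functions is continuous
and commutes with convergent arguments, so the midpoint equations pass to the limit at `a`.
-/

def IsMidpoint {X : Type*} (d : X → X → ℝ) (z w x : X) : Prop :=
  d z x = d z w / 2 ∧ d x w = d z w / 2

def UniformlyProper {ι E : Type*} [Norm E] (dn : ι → E → E → ℝ) : Prop :=
  ∀ r > (0 : ℝ), ∀ T > (0 : ℝ), ∃ R > (0 : ℝ), ∀ n, ∀ z w : E, ‖z‖ ≤ r → R ≤ ‖w‖ → T < dn n z w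

theorem UniformlyProper.exists_norm_le {ι E : Type*} [SeminormedAddCommGroup E]
    {dn : ι → E → E → ℝ} (hproper : UniformlyProper dn) (z : E) {x : ι → E}
    (hx : BddAbove (Set.range fun n => dn n z (x n))) : ∃ R, ∀ n, ‖x n‖ ≤ R := by
  obtain ⟨T, hT⟩ := hx
  obtain ⟨R, -, hR⟩ := hproper (‖z‖ + 1) (by positivity) (max T 1) (by positivity)
  refine ⟨R, fun n => le_of_not_ge fun hn => ?_⟩
  have hfar := hR n z (x n) (by linarith) hn
  linarith [le_max_left T 1, hT ⟨n, rfl⟩]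

theorem TendstoLocallyUniformly.comp_tendsto {ι κ α β : Type*} [TopologicalSpace α]
    [UniformSpace β] {F : ι → α → β} {f : α → β} {p : Filter ι} {q : Filter κ} {φ : κ → ι}
    (h : TendstoLocallyUniformly F f p) (hφ : Tendsto φ q p) :
    TendstoLocallyUniformly (fun k => F (φ k)) f q :=
  fun u hu x => (h u hu x).imp fun _ ht => ⟨ht.1, hφ.eventually ht.2⟩

theorem isMidpoint_of_tendstoLocallyUniformly {ι X : Type*} [TopologicalSpace X]
    {F : ι → X → X → ℝ} {f : X → X → ℝ} {p : Filter ι} [p.NeBot]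
    (hF : TendstoLocallyUniformly (fun n (q : X × X) => F n q.1 q.2) (fun q => f q.1 q.2) p)
    (hc : ∃ᶠ n in p, Continuous fun q : X × X => F n q.1 q.2)
    {z w a : X} {x : ι → X} (hx : Tendsto x p (𝓝 a))
    (hmid : ∀ᶠ n in p, IsMidpoint (F n) z w (x n)) : IsMidpoint f z w a := by
  have hf := hF.continuous hc
  have half : Tendsto (fun n => F n z w / 2) p (𝓝 (f z w / 2)) :=
    (hF.tendsto_comp (x := (z, w)) hf.continuousAt tendsto_const_nhds).div_const 2
  constructor
  · refine tendsto_nhds_unique ?_ half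
    refine (hF.tendsto_comp hf.continuousAt (tendsto_const_nhds.prodMk_nhds hx)).congr' ?_
    exact hmid.mono fun n hn => hn.1
  · refine tendsto_nhds_unique ?_ half
    refine (hF.tendsto_comp hf.continuousAt (hx.prodMk_nhds tendsto_const_nhds)).congr' ?_
    exact hmid.mono fun n hn => hn.2

theorem midpoints_of_locally_uniform_limit_general
    (dn : ℕ → ℂ → ℂ → ℝ) (d : ℂ → ℂ → ℝ)
    (hcont : ∀ n, Continuous fun p : ℂ × ℂ => dn n p.1 p.2)
    (hunif : ∀ K : Set (ℂ × ℂ), IsCompact K →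
      TendstoUniformlyOn (fun n (p : ℂ × ℂ) => dn n p.1 p.2) (fun p => d p.1 p.2) atTop K)
    (hmid : ∀ n (z w : ℂ), ∃ x : ℂ,
      dn n z x = dn n z w / 2 ∧ dn n x w = dn n z w / 2)
    (hproper : ∀ r > (0 : ℝ), ∀ T > (0 : ℝ), ∃ R > (0 : ℝ), ∀ n, ∀ z w : ℂ,
      ‖z‖ ≤ r → R ≤ ‖w‖ → T < dn n z w) :
    ∀ z w : ℂ, ∃ x : ℂ, d z x = d z w / 2 ∧ d x w = d z w / 2 := by
  intro z w
  choose x hx using fun n => hmid n z w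
  have hbdd : BddAbove (Set.range fun n => dn n z (x n)) := by
    have hzw := (hunif {(z, w)} isCompact_singleton).tendsto_at (Set.mem_singleton (z, w))
    simpa only [(hx _).1] using (hzw.div_const 2).bddAbove_range
  obtain ⟨R, hR⟩ := UniformlyProper.exists_norm_le hproper z hbdd
  obtain ⟨a, -, φ, hφ, hlim⟩ :=
    (isCompact_closedBall (0 : ℂ) R).tendsto_subseq (x := x) fun n => by simpa using hR n
  have hF := tendstoLocallyUniformly_iff_forall_isCompact.2 hunif
  exact ⟨a, isMidpoint_of_tendstoLocallyUniformly (hF.comp_tendsto hφ.tendsto_atTop)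
    (.of_forall fun k => hcont (φ k)) hlim (.of_forall fun k => hx (φ k))⟩

/-- Let `dn n` be continuous metrics on `ℂ` converging locally uniformly
(on compact subsets of `ℂ × ℂ`) to `d`. If every `dn n` admits midpoints and the metrics
`dn n` are uniformly proper (points of large modulus are uniformly far from bounded sets),
then `d` admits midpoints. -/
theorem midpoints_of_locally_uniform_limit
    (dn : ℕ → ℂ → ℂ → ℝ) (d : ℂ → ℂ → ℝ)
    (hnonneg : ∀ n z w, 0 ≤ dn n z w)
    (heq : ∀ n z w, dn n z w = 0 ↔ z = w)
    (hsymm : ∀ n z w, dn n z w = dn n w z)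
    (htri : ∀ n x y z, dn n x z ≤ dn n x y + dn n y z)
    (hcont : ∀ n, Continuous fun p : ℂ × ℂ => dn n p.1 p.2)
    (hunif : ∀ K : Set (ℂ × ℂ), IsCompact K →
      TendstoUniformlyOn (fun n (p : ℂ × ℂ) => dn n p.1 p.2) (fun p => d p.1 p.2) atTop K)
    (hmid : ∀ n (z w : ℂ), ∃ x : ℂ,
      dn n z x = dn n z w / 2 ∧ dn n x w = dn n z w / 2)
    (hproper : ∀ r > (0 : ℝ), ∀ T > (0 : ℝ), ∃ R > (0 : ℝ), ∀ n, ∀ z w : ℂ,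
      ‖z‖ ≤ r → R ≤ ‖w‖ → T < dn n z w) :
    ∀ z w : ℂ, ∃ x : ℂ, d z x = d z w / 2 ∧ d x w = d z w / 2 :=
  midpoints_of_locally_uniform_limit_general dn d hcont hunif hmid hproper
end

section
/- Let d : ℂ × ℂ → [0, ∞] be a function which is lower semicontinuous with respect to the Euclidean topology on ℂ × ℂ, symmetric (d(x,y) = d(y,x)), vanishing on the diagonal (d(x,x) = 0 for all x), and satisfying the triangle inequality d(x,z) ≤ d(x,y) + d(y,z) (with the usual arithmetic on [0,∞]). Let A, B ⊆ ℂ be nonempty disjoint compact sets, and define E_A := {x ∈ ℂ : inf_{a ∈ A} d(x,a) = 0} and E_B := {x ∈ ℂ : inf_{b ∈ B} d(x,b) = 0}. Then the following are equivalent: (1) inf_{a ∈ A, b ∈ B} d(a,b) > 0; (2) E_A ∩ E_B = ∅; (3) E_A ∩ B = ∅; (4) E_B ∩ A = ∅. -/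
open Filter Topology Function
open scoped ENNReal

/-!
If the `d`-distance between `A` and `B` vanishes, it is attained: the sequential lower
semicontinuity of `d` makes `(a, b) ↦ d a b` lower semicontinuous, so it attains its infimum
on the compact set `A × B`, giving `a ∈ A`, `b ∈ B` with `d a b = 0`; then `b ∈ E_A` and
`a ∈ E_B`. Conversely a point of `E_A ∩ E_B` forces the distance to vanish by the triangle
inequality, and `A ⊆ E_A`, `B ⊆ E_B` because `d` vanishes on the diagonal.
-/

theorem lowerSemicontinuous_uncurry_of_le_liminf {X Y : Type*} [TopologicalSpace X]
    [TopologicalSpace Y] [FirstCountableTopology X] [FirstCountableTopology Y]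
    {d : X → Y → ℝ≥0∞}
    (hd : ∀ (x : ℕ → X) (y : ℕ → Y) (a : X) (b : Y),
      Tendsto x atTop (𝓝 a) → Tendsto y atTop (𝓝 b) →
      d a b ≤ liminf (fun m => d (x m) (y m)) atTop) :
    LowerSemicontinuous (uncurry d) := by
  refine lowerSemicontinuous_iff_isClosed_preimage.2 fun r => IsSeqClosed.isClosed ?_
  intro p q hp hpq
  calc uncurry d q ≤ liminf (fun m => d (p m).1 (p m).2) atTop :=
        hd _ _ _ _ ((continuous_fst.tendsto q).comp hpq)
          ((continuous_snd.tendsto q).comp hpq)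
    _ ≤ r := liminf_le_of_frequently_le' (Frequently.of_forall hp)

theorem exists_eq_zero_of_iInf₂_iInf₂_eq_zero {X Y : Type*} [TopologicalSpace X]
    [TopologicalSpace Y] {d : X → Y → ℝ≥0∞} (hd : LowerSemicontinuous (uncurry d))
    {A : Set X} {B : Set Y} (hA : IsCompact A) (hB : IsCompact B)
    (h : ⨅ a ∈ A, ⨅ b ∈ B, d a b = 0) : ∃ a ∈ A, ∃ b ∈ B, d a b = 0 := by
  have hne : (A ×ˢ B).Nonempty := by
    by_contra hAB
    rcases Set.prod_eq_empty_iff.1 (Set.not_nonempty_iff_eq_empty.1 hAB) with rfl | rfl <;>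
      simp at h
  obtain ⟨⟨a, b⟩, ⟨ha, hb⟩, hmin⟩ :=
    (hd.lowerSemicontinuousOn _).exists_isMinOn hne (hA.prod hB)
  refine ⟨a, ha, b, hb, nonpos_iff_eq_zero.1 (h ▸ ?_)⟩
  exact le_iInf₂ fun a' ha' => le_iInf₂ fun b' hb' => hmin (Set.mk_mem_prod ha' hb')

section Pseudometric

variable {X : Type*} {d : X → X → ℝ≥0∞} {A B : Set X}

theorem biInf_eq_zero_of_eq_zero {x a : X} (ha : a ∈ A) (h : d x a = 0) :
    ⨅ a ∈ A, d x a = 0 :=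
  nonpos_iff_eq_zero.1 (iInf₂_le_of_le a ha h.le)

theorem iInf₂_iInf₂_le_add (hsymm : ∀ x y, d x y = d y x)
    (htri : ∀ x y z, d x z ≤ d x y + d y z) (x : X) :
    ⨅ a ∈ A, ⨅ b ∈ B, d a b ≤ (⨅ a ∈ A, d x a) + ⨅ b ∈ B, d x b :=
  ENNReal.le_iInf₂_add_iInf₂ fun a ha b hb =>
    iInf₂_le_of_le a ha <| iInf₂_le_of_le b hb <| hsymm x a ▸ htri a x b

end Pseudometric

theorem positive_distance_iff_zero_sets_disjoint_general
    (d : ℂ → ℂ → ℝ≥0∞)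
    (hlsc : ∀ (x y : ℕ → ℂ) (a b : ℂ),
      Tendsto x atTop (𝓝 a) → Tendsto y atTop (𝓝 b) →
      d a b ≤ liminf (fun m => d (x m) (y m)) atTop)
    (hsymm : ∀ x y, d x y = d y x)
    (hdiag : ∀ x, d x x = 0)
    (htri : ∀ x y z, d x z ≤ d x y + d y z)
    (A B : Set ℂ)
    (hA : IsCompact A) (hB : IsCompact B)
    (EA EB : Set ℂ)
    (hEA : EA = {x : ℂ | (⨅ a ∈ A, d x a) = 0})
    (hEB : EB = {x : ℂ | (⨅ b ∈ B, d x b) = 0}) :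
    ((0 < ⨅ a ∈ A, ⨅ b ∈ B, d a b) ↔ EA ∩ EB = ∅) ∧
    ((0 < ⨅ a ∈ A, ⨅ b ∈ B, d a b) ↔ EA ∩ B = ∅) ∧
    ((0 < ⨅ a ∈ A, ⨅ b ∈ B, d a b) ↔ EB ∩ A = ∅) := by
  have hB_sub : B ⊆ EB := hEB ▸ fun b hb => biInf_eq_zero_of_eq_zero hb (hdiag b)
  have hA_sub : A ⊆ EA := hEA ▸ fun a ha => biInf_eq_zero_of_eq_zero ha (hdiag a)
  have hsep (hpos : 0 < ⨅ a ∈ A, ⨅ b ∈ B, d a b) : EA ∩ EB = ∅ := by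
    refine Set.eq_empty_of_forall_notMem fun x ⟨hxA, hxB⟩ => hpos.ne' ?_
    simp only [hEA, hEB, Set.mem_ofPred_eq] at hxA hxB
    simpa [hxA, hxB] using iInf₂_iInf₂_le_add hsymm htri x (A := A) (B := B)
  have hmeet (h : ¬ 0 < ⨅ a ∈ A, ⨅ b ∈ B, d a b) :
      (EA ∩ B).Nonempty ∧ (EB ∩ A).Nonempty := by
    obtain ⟨a, ha, b, hb, hab⟩ :=
      exists_eq_zero_of_iInf₂_iInf₂_eq_zero (lowerSemicontinuous_uncurry_of_le_liminf hlsc)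
        hA hB (nonpos_iff_eq_zero.1 (not_lt.1 h))
    subst hEA hEB
    exact ⟨⟨b, biInf_eq_zero_of_eq_zero ha (hsymm b a ▸ hab), hb⟩,
      ⟨a, biInf_eq_zero_of_eq_zero hb hab, ha⟩⟩
  refine ⟨⟨hsep, fun h => ?_⟩, ⟨fun hpos => ?_, fun h => ?_⟩,
    ⟨fun hpos => ?_, fun h => ?_⟩⟩
  · by_contra hD
    exact ((hmeet hD).1.mono (Set.inter_subset_inter_right _ hB_sub)).ne_empty h
  · exact Set.subset_eq_empty (Set.inter_subset_inter_right _ hB_sub) (hsep hpos)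
  · by_contra hD
    exact (hmeet hD).1.ne_empty h
  · exact Set.subset_eq_empty (fun _ hx => Set.mem_inter (hA_sub hx.2) hx.1) (hsep hpos)
  · by_contra hD
    exact (hmeet hD).2.ne_empty h

/-- Let `d : ℂ × ℂ → [0,∞]` be a lower semicontinuous extended pseudometric
(symmetric, vanishing on the diagonal, satisfying the triangle inequality), and let `A, B`
be nonempty disjoint compact subsets of `ℂ`. With `E_A`, `E_B` the sets of points at zero
`d`-distance from `A`, `B` respectively, the following are equivalent: the `d`-distance
between `A` and `B` is positive; `E_A ∩ E_B = ∅`; `E_A ∩ B = ∅`; `E_B ∩ A = ∅`. -/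
theorem positive_distance_iff_zero_sets_disjoint
    (d : ℂ → ℂ → ℝ≥0∞)
    (hlsc : ∀ (x y : ℕ → ℂ) (a b : ℂ),
      Tendsto x atTop (𝓝 a) → Tendsto y atTop (𝓝 b) →
      d a b ≤ liminf (fun m => d (x m) (y m)) atTop)
    (hsymm : ∀ x y, d x y = d y x)
    (hdiag : ∀ x, d x x = 0)
    (htri : ∀ x y z, d x z ≤ d x y + d y z)
    (A B : Set ℂ) (hAne : A.Nonempty) (hBne : B.Nonempty)
    (hA : IsCompact A) (hB : IsCompact B) (hAB : Disjoint A B)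
    (EA EB : Set ℂ)
    (hEA : EA = {x : ℂ | (⨅ a ∈ A, d x a) = 0})
    (hEB : EB = {x : ℂ | (⨅ b ∈ B, d x b) = 0}) :
    ((0 < ⨅ a ∈ A, ⨅ b ∈ B, d a b) ↔ EA ∩ EB = ∅) ∧
    ((0 < ⨅ a ∈ A, ⨅ b ∈ B, d a b) ↔ EA ∩ B = ∅) ∧
    ((0 < ⨅ a ∈ A, ⨅ b ∈ B, d a b) ↔ EB ∩ A = ∅) :=
  positive_distance_iff_zero_sets_disjoint_general d hlsc hsymm hdiag htri A B hA hB EA EB hEA hEB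
end
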